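/- Define C(j_2, j_1) = ∫_t^T φ_{j_2}(s) ( ∫_t^s φ_{j_1}(u) du ) ds for j_1, j_2 ≥ 0. Then C(0,0) = Δ/2; for every i ≥ 1, C(i, i−1) = Δ/(2√(4i² − 1)) and C(i−1, i) = −Δ/(2√(4i² − 1)); and C(j_2, j_1) = 0 in all remaining cases (in particular C(j, j) = 0 for all j ≥ 1, and C(j_2, j_1) = 0 whenever |j_1 − j_2| ≥ 2). -/

import Mathlib

/-!
The `φ_j` are orthonormal in `L²[t, T]`, so it suffices to write `s ↦ ∫_t^s φ_j` as a
combination of `φ_{j-1}` and `φ_{j+1}`. Differentiating `(x² - 1)^(n+2)` twice in Rodrigues'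
formula gives `P_{n+2}' = (2n+3) P_{n+1} + P_n'`, and Leibniz' rule gives `P_n(±1) = (±1)^n`;
hence `∫_{-1}^x P_{n+1} = (P_{n+2}(x) - P_n(x)) / (2n+3)` and `∫_{-1}^x P_0 = P_0(x) + P_1(x)`.
After the affine change of variables `[t, T] → [-1, 1]` this becomes
`∫_t^s φ_j = Δ/2 · (φ_{j+1}(s) / √(4(j+1)² - 1) - φ_{j-1}(s) / √(4j² - 1))` for `j ≥ 1`.
Orthogonality of the `P_n` comes from `n`-fold integration by parts in Rodrigues' formula,
and `∫ P_n² = 2/(2n+1)` from integrating `P_n P_{n+1}'` by parts, using the recurrence and the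
values `P_n(±1)`.
-/

open MeasureTheory

/-- The `n`-th Legendre polynomial via Rodrigues' formula. -/
noncomputable def legendreP (n : ℕ) (x : ℝ) : ℝ :=
  (1 / (2 ^ n * (n.factorial : ℝ))) * iteratedDeriv n (fun y => (y ^ 2 - 1) ^ n) x

/-- The scaled Legendre functions on `[t, T]`. -/
noncomputable def scaledLegendre (t T : ℝ) (j : ℕ) (x : ℝ) : ℝ :=
  Real.sqrt ((2 * j + 1) / (T - t)) * legendreP j (2 * (x - t) / (T - t) - 1)

open Polynomial

theorem Polynomial.iteratedDeriv_eval {𝕜 : Type*} [NontriviallyNormedField 𝕜] (p : 𝕜[X])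
    (n : ℕ) :
    iteratedDeriv n (fun x => p.eval x) = fun x => (derivative^[n] p).eval x := by
  induction n with
  | zero => simp
  | succ n ih =>
    rw [iteratedDeriv_succ, ih, Function.iterate_succ_apply']
    ext x
    exact Polynomial.deriv _

theorem Polynomial.eval_iterate_derivative_X_sub_C_pow_mul {R : Type*} [CommRing R]
    (n : ℕ) (a : R) (f : R[X]) :
    (derivative^[n] ((X - C a) ^ n * f)).eval a = n.factorial * f.eval a := by
  rw [iterate_derivative_mul, eval_finsetSum,
    Finset.sum_eq_single_of_mem 0 (Finset.mem_range.mpr n.succ_pos)]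
  · simp [iterate_derivative_X_sub_pow_self]
  · intro k hk hk0
    rw [iterate_derivative_X_sub_pow, Nat.sub_sub_self (Finset.mem_range_succ_iff.mp hk)]
    simp [zero_pow hk0]

theorem derivative_X_sq_sub_one_pow_succ (m : ℕ) :
    derivative ((X ^ 2 - 1 : ℝ[X]) ^ (m + 1)) =
      (2 * (m + 1) : ℝ) • (X * (X ^ 2 - 1) ^ m) := by
  rw [derivative_pow_succ, derivative_sub, derivative_X_sq, derivative_one, sub_zero,
    smul_eq_C_mul, C_mul]
  ring

theorem iterate_derivative_two_X_sq_sub_one_pow (n : ℕ) :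
    derivative^[2] ((X ^ 2 - 1 : ℝ[X]) ^ (n + 2)) =
      (2 * (n + 2) : ℝ) • ((2 * n + 3 : ℝ) • (X ^ 2 - 1) ^ (n + 1)
        + (2 * (n + 1) : ℝ) • (X ^ 2 - 1) ^ n) := by
  rw [Function.iterate_succ_apply', Function.iterate_one, derivative_X_sq_sub_one_pow_succ,
    derivative_smul, derivative_mul, derivative_X, derivative_X_sq_sub_one_pow_succ]
  simp only [smul_eq_C_mul, map_add, map_mul, map_natCast, map_ofNat, map_one, Nat.cast_add,
    Nat.cast_one]
  ring

noncomputable def legendrePoly (n : ℕ) : ℝ[X] :=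
  (1 / (2 ^ n * n.factorial : ℝ)) • derivative^[n] ((X ^ 2 - 1) ^ n)

theorem legendreP_eq_eval (n : ℕ) (x : ℝ) : legendreP n x = (legendrePoly n).eval x := by
  have h : (fun y : ℝ => (y ^ 2 - 1) ^ n) = fun y => ((X ^ 2 - 1) ^ n : ℝ[X]).eval y := by
    simp
  rw [legendreP, h, iteratedDeriv_eval, legendrePoly, eval_smul, smul_eq_mul]

theorem natDegree_legendrePoly_le (n : ℕ) : (legendrePoly n).natDegree ≤ n := by
  refine (natDegree_smul_le _ _).trans <| (natDegree_iterate_derivative _ _).trans ?_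
  have : ((X ^ 2 - 1 : ℝ[X]) ^ n).natDegree ≤ n * 2 :=
    natDegree_pow_le_of_le n (by compute_degree)
  omega

theorem legendrePoly_zero : legendrePoly 0 = 1 := by simp [legendrePoly]

theorem legendrePoly_one : legendrePoly 1 = X := by
  simp only [legendrePoly, Function.iterate_one, pow_one, derivative_sub, derivative_X_sq,
    derivative_one, sub_zero, smul_eq_C_mul, ← mul_assoc, ← C_mul]
  norm_num

theorem eval_one_legendrePoly (n : ℕ) : (legendrePoly n).eval 1 = 1 := by
  have h : (X ^ 2 - 1 : ℝ[X]) ^ n = (X - C 1) ^ n * (X + 1) ^ n := by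
    rw [← mul_pow, C_1]; ring
  have : (n.factorial : ℝ) ≠ 0 := Nat.cast_ne_zero.mpr n.factorial_ne_zero
  rw [legendrePoly, eval_smul, h, eval_iterate_derivative_X_sub_C_pow_mul]
  norm_num
  field_simp

theorem eval_neg_one_legendrePoly (n : ℕ) : (legendrePoly n).eval (-1) = (-1) ^ n := by
  have h : (X ^ 2 - 1 : ℝ[X]) ^ n = (X - C (-1)) ^ n * (X - 1) ^ n := by
    rw [← mul_pow, C_neg, C_1]; ring
  have : (n.factorial : ℝ) ≠ 0 := Nat.cast_ne_zero.mpr n.factorial_ne_zero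
  rw [legendrePoly, eval_smul, h, eval_iterate_derivative_X_sub_C_pow_mul]
  norm_num [neg_pow (2 : ℝ)]
  field_simp

theorem derivative_legendrePoly_add_two (n : ℕ) :
    derivative (legendrePoly (n + 2)) =
      (2 * n + 3 : ℝ) • legendrePoly (n + 1) + derivative (legendrePoly n) := by
  have h : derivative^[n + 3] ((X ^ 2 - 1 : ℝ[X]) ^ (n + 2)) =
      derivative^[n + 1] (derivative^[2] ((X ^ 2 - 1 : ℝ[X]) ^ (n + 2))) := by
    rw [← Function.iterate_add_apply]
  simp only [legendrePoly, derivative_smul, ← Function.iterate_succ_apply' derivative]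
  rw [h, iterate_derivative_two_X_sq_sub_one_pow, iterate_derivative_smul, iterate_map_add,
    iterate_derivative_smul, iterate_derivative_smul]
  simp only [smul_add, smul_smul]
  congr 2 <;>
  · simp only [Nat.factorial_succ]
    push_cast
    field_simp
    ring

theorem Polynomial.integral_eval_derivative (p : ℝ[X]) (a b : ℝ) :
    ∫ x in a..b, (derivative p).eval x = p.eval b - p.eval a :=
  intervalIntegral.integral_eq_sub_of_hasDerivAt (fun x _ => p.hasDerivAt x)
    ((derivative p).continuous.intervalIntegrable _ _)

noncomputable def integralNegOneOne : ℝ[X] →ₗ[ℝ] ℝ where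
  toFun p := ∫ x in (-1)..1, p.eval x
  map_add' p q := by
    simp only [eval_add]
    exact intervalIntegral.integral_add (p.continuous.intervalIntegrable _ _)
      (q.continuous.intervalIntegrable _ _)
  map_smul' c p := by simp

theorem integralNegOneOne_apply (p : ℝ[X]) :
    integralNegOneOne p = ∫ x in (-1)..1, p.eval x := rfl

theorem integralNegOneOne_derivative_mul (p q : ℝ[X]) :
    integralNegOneOne (derivative p * q) =
      p.eval 1 * q.eval 1 - p.eval (-1) * q.eval (-1) - integralNegOneOne (p * derivative q) := by
  have h := integral_eval_derivative (p * q) (-1) 1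
  rw [derivative_mul, ← integralNegOneOne_apply, map_add] at h
  simp only [eval_mul] at h
  linarith

theorem integralNegOneOne_iterate_derivative_mul {q : ℝ[X]} {m : ℕ} (hq : (X ^ 2 - 1) ^ m ∣ q)
    (g : ℝ[X]) :
    integralNegOneOne (derivative^[m] q * g) =
      (-1) ^ m * integralNegOneOne (q * derivative^[m] g) := by
  induction m generalizing q with
  | zero => simp
  | succ m ih =>
    have hq' : (X ^ 2 - 1) ^ m ∣ derivative q := by
      simpa using pow_sub_one_dvd_derivative_of_pow_dvd hq
    have hroot : ∀ x : ℝ, x ^ 2 = 1 → q.eval x = 0 := fun x hx => by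
      obtain ⟨r, rfl⟩ := (dvd_pow_self _ m.succ_ne_zero).trans hq
      simp [hx]
    rw [Function.iterate_succ_apply, ih hq', integralNegOneOne_derivative_mul,
      hroot 1 (by norm_num), hroot (-1) (by norm_num), ← Function.iterate_succ_apply' derivative]
    ring

theorem integralNegOneOne_legendrePoly_mul {n : ℕ} {g : ℝ[X]} (hg : g.natDegree < n) :
    integralNegOneOne (legendrePoly n * g) = 0 := by
  rw [legendrePoly, smul_mul_assoc, map_smul, integralNegOneOne_iterate_derivative_mul dvd_rfl,
    iterate_derivative_eq_zero hg]
  simp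

theorem integralNegOneOne_legendrePoly_mul_legendrePoly_of_ne {m n : ℕ} (h : m ≠ n) :
    integralNegOneOne (legendrePoly m * legendrePoly n) = 0 := by
  rcases h.lt_or_gt with h | h
  · rw [mul_comm]
    exact integralNegOneOne_legendrePoly_mul ((natDegree_legendrePoly_le m).trans_lt h)
  · exact integralNegOneOne_legendrePoly_mul ((natDegree_legendrePoly_le n).trans_lt h)

theorem integralNegOneOne_legendrePoly_mul_self (n : ℕ) :
    integralNegOneOne (legendrePoly n * legendrePoly n) = 2 / (2 * n + 1) := by
  cases n with
  | zero => norm_num [legendrePoly_zero, integralNegOneOne_apply]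
  | succ n =>
    have hdeg : ∀ k, (derivative (legendrePoly k)).natDegree < k + 1 := fun k =>
      (natDegree_derivative_le _).trans_lt (by have := natDegree_legendrePoly_le k; omega)
    have hsign : (-1 : ℝ) ^ (n + 2) * (-1) ^ (n + 1) = -1 := by
      rw [← pow_add]; exact Odd.neg_one_pow ⟨n + 1, by ring⟩
    have hparts :
        integralNegOneOne (derivative (legendrePoly (n + 2)) * legendrePoly (n + 1)) = 2 := by
      rw [integralNegOneOne_derivative_mul, integralNegOneOne_legendrePoly_mul (hdeg (n + 1)),
        eval_one_legendrePoly, eval_one_legendrePoly, eval_neg_one_legendrePoly,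
        eval_neg_one_legendrePoly, hsign]
      norm_num
    rw [derivative_legendrePoly_add_two, add_mul, map_add, mul_comm (derivative _),
      integralNegOneOne_legendrePoly_mul (hdeg n), smul_mul_assoc, map_smul, smul_eq_mul,
      add_zero] at hparts
    push_cast
    field_simp
    linarith

theorem integral_legendrePoly_zero (y : ℝ) :
    ∫ x in (-1)..y, (legendrePoly 0).eval x =
      (legendrePoly 0).eval y + (legendrePoly 1).eval y := by
  simp only [legendrePoly_zero, legendrePoly_one, eval_one, eval_X,
    intervalIntegral.integral_const, smul_eq_mul, mul_one]
  ring

theorem integral_legendrePoly_succ (n : ℕ) (y : ℝ) :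
    ∫ x in (-1)..y, (legendrePoly (n + 1)).eval x =
      ((legendrePoly (n + 2)).eval y - (legendrePoly n).eval y) / (2 * n + 3) := by
  have h : legendrePoly (n + 1) =
      (2 * n + 3 : ℝ)⁻¹ • derivative (legendrePoly (n + 2) - legendrePoly n) := by
    rw [derivative_sub, derivative_legendrePoly_add_two, add_sub_cancel_right, smul_smul,
      inv_mul_cancel₀ (by positivity), one_smul]
  simp only [h, eval_smul, smul_eq_mul, intervalIntegral.integral_const_mul,
    integral_eval_derivative, eval_sub, eval_neg_one_legendrePoly]
  ring

theorem Real.sqrt_div_eq_sqrt_mul_mul_sqrt_div_div {a b : ℝ} (ha : 0 < a) (hb : 0 ≤ b)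
    (c : ℝ) :
    √(b / c) = √(a * b) * (√(a / c) / a) := by
  rw [← mul_div_assoc, ← Real.sqrt_mul (by positivity),
    show a * b * (a / c) = a ^ 2 * (b / c) by ring,
    Real.sqrt_mul (sq_nonneg a), Real.sqrt_sq ha.le]
  field_simp

noncomputable def unitCoord (t T x : ℝ) : ℝ := 2 * (x - t) / (T - t) - 1

theorem unitCoord_left (t T : ℝ) : unitCoord t T t = -1 := by simp [unitCoord]

theorem unitCoord_right {t T : ℝ} (h : t ≠ T) : unitCoord t T T = 1 := by
  rw [unitCoord, mul_div_assoc, div_self (sub_ne_zero.mpr h.symm)]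
  norm_num

theorem continuous_unitCoord (t T : ℝ) : Continuous (unitCoord t T) := by
  unfold unitCoord; fun_prop

theorem scaledLegendre_eq (t T : ℝ) (j : ℕ) (x : ℝ) :
    scaledLegendre t T j x =
      √((2 * j + 1) / (T - t)) * (legendrePoly j).eval (unitCoord t T x) := by
  rw [scaledLegendre, legendreP_eq_eval, unitCoord]

theorem continuous_scaledLegendre (t T : ℝ) (j : ℕ) : Continuous (scaledLegendre t T j) := by
  simp only [funext (scaledLegendre_eq t T j)]
  exact continuous_const.mul ((legendrePoly j).continuous.comp (continuous_unitCoord t T))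

theorem intervalIntegrable_scaledLegendre_mul_const_mul (t T : ℝ) (m j : ℕ) (c a b : ℝ) :
    IntervalIntegrable (fun s => scaledLegendre t T m s * (c * scaledLegendre t T j s))
      volume a b :=
  ((continuous_scaledLegendre t T m).mul
    (continuous_const.mul (continuous_scaledLegendre t T j))).intervalIntegrable _ _

noncomputable def legendreDoubleCoeff (t T : ℝ) (j₂ j₁ : ℕ) : ℝ :=
  ∫ s in t..T, scaledLegendre t T j₂ s * ∫ u in t..s, scaledLegendre t T j₁ u

section Scaled

variable {t T : ℝ}

theorem intervalIntegral.integral_comp_unitCoord (f : ℝ → ℝ) (h : t ≠ T) (a b : ℝ) :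
    ∫ u in a..b, f (unitCoord t T u) =
      (T - t) / 2 * ∫ x in unitCoord t T a..unitCoord t T b, f x := by
  have hc : (T - t) / 2 ≠ 0 := div_ne_zero (sub_ne_zero.mpr h.symm) two_ne_zero
  have e : ∀ u, unitCoord t T u = u / ((T - t) / 2) - (t / ((T - t) / 2) + 1) := fun u => by
    rw [unitCoord]; field_simp; ring
  simp only [e]
  exact intervalIntegral.integral_comp_div_sub f hc _

theorem integral_scaledLegendre_mul_scaledLegendre (ht : t < T) (m n : ℕ) :
    ∫ s in t..T, scaledLegendre t T m s * scaledLegendre t T n s = if m = n then 1 else 0 := by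
  have hΔ : 0 < T - t := sub_pos.mpr ht
  simp only [scaledLegendre_eq, mul_mul_mul_comm _ (eval _ _), ← eval_mul,
    intervalIntegral.integral_const_mul]
  rw [intervalIntegral.integral_comp_unitCoord (fun x => eval x _) ht.ne, unitCoord_left,
    unitCoord_right ht.ne, ← integralNegOneOne_apply]
  split_ifs with h
  · subst h
    rw [← sq, Real.sq_sqrt (by positivity), integralNegOneOne_legendrePoly_mul_self]
    field_simp
  · rw [integralNegOneOne_legendrePoly_mul_legendrePoly_of_ne h, mul_zero, mul_zero]

theorem integral_scaledLegendre_zero (h : t ≠ T) (s : ℝ) :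
    ∫ u in t..s, scaledLegendre t T 0 u =
      (T - t) / 2 * scaledLegendre t T 0 s + (T - t) / (2 * √3) * scaledLegendre t T 1 s := by
  simp only [scaledLegendre_eq, intervalIntegral.integral_const_mul]
  rw [intervalIntegral.integral_comp_unitCoord (fun x => eval x _) h, unitCoord_left,
    integral_legendrePoly_zero]
  norm_num
  field_simp

theorem integral_scaledLegendre_succ (h : t ≠ T) (n : ℕ) (s : ℝ) :
    ∫ u in t..s, scaledLegendre t T (n + 1) u =
      (T - t) / (2 * √(4 * ((n + 2 : ℕ) : ℝ) ^ 2 - 1)) * scaledLegendre t T (n + 2) s -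
        (T - t) / (2 * √(4 * ((n + 1 : ℕ) : ℝ) ^ 2 - 1)) * scaledLegendre t T n s := by
  simp only [scaledLegendre_eq, intervalIntegral.integral_const_mul]
  rw [intervalIntegral.integral_comp_unitCoord (fun x => eval x _) h, unitCoord_left,
    integral_legendrePoly_succ]
  have ha : (0 : ℝ) < 2 * n + 3 := by positivity
  have e2 := Real.sqrt_div_eq_sqrt_mul_mul_sqrt_div_div ha (b := 2 * n + 5) (by positivity) (T - t)
  have e0 := Real.sqrt_div_eq_sqrt_mul_mul_sqrt_div_div ha (b := 2 * n + 1) (by positivity) (T - t)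
  have q2 : 0 < √((2 * n + 3) * (2 * n + 5)) := Real.sqrt_pos.mpr (by positivity)
  have q0 : 0 < √((2 * n + 3) * (2 * n + 1)) := Real.sqrt_pos.mpr (by positivity)
  push_cast
  rw [show 4 * ((n : ℝ) + 2) ^ 2 - 1 = (2 * n + 3) * (2 * n + 5) by ring,
    show 4 * ((n : ℝ) + 1) ^ 2 - 1 = (2 * n + 3) * (2 * n + 1) by ring,
    show 2 * ((n : ℝ) + 2) + 1 = 2 * n + 5 by ring,
    show 2 * ((n : ℝ) + 1) + 1 = 2 * n + 3 by ring,
    e2, e0]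
  field_simp

theorem integral_scaledLegendre_mul_const_mul_scaledLegendre (ht : t < T) (m a : ℕ) (c : ℝ) :
    ∫ s in t..T, scaledLegendre t T m s * (c * scaledLegendre t T a s) =
      if m = a then c else 0 := by
  simp only [mul_left_comm _ c, intervalIntegral.integral_const_mul,
    integral_scaledLegendre_mul_scaledLegendre ht, mul_ite, mul_one, mul_zero]

theorem legendreDoubleCoeff_zero (ht : t < T) (m : ℕ) :
    legendreDoubleCoeff t T m 0 =
      (if m = 0 then (T - t) / 2 else 0) + (if m = 1 then (T - t) / (2 * √3) else 0) := by
  simp only [legendreDoubleCoeff, integral_scaledLegendre_zero ht.ne, mul_add]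
  rw [intervalIntegral.integral_add (intervalIntegrable_scaledLegendre_mul_const_mul ..)
    (intervalIntegrable_scaledLegendre_mul_const_mul ..),
    integral_scaledLegendre_mul_const_mul_scaledLegendre ht,
    integral_scaledLegendre_mul_const_mul_scaledLegendre ht]

theorem legendreDoubleCoeff_succ (ht : t < T) (m n : ℕ) :
    legendreDoubleCoeff t T m (n + 1) =
      (if m = n + 2 then (T - t) / (2 * √(4 * ((n + 2 : ℕ) : ℝ) ^ 2 - 1)) else 0) -
        (if m = n then (T - t) / (2 * √(4 * ((n + 1 : ℕ) : ℝ) ^ 2 - 1)) else 0) := by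
  simp only [legendreDoubleCoeff, integral_scaledLegendre_succ ht.ne, mul_sub]
  rw [intervalIntegral.integral_sub (intervalIntegrable_scaledLegendre_mul_const_mul ..)
    (intervalIntegrable_scaledLegendre_mul_const_mul ..),
    integral_scaledLegendre_mul_const_mul_scaledLegendre ht,
    integral_scaledLegendre_mul_const_mul_scaledLegendre ht]

end Scaled

/-- Exact values of the double Fourier--Legendre coefficients
`C(j₂, j₁) = ∫_t^T φ_{j₂}(s) ∫_t^s φ_{j₁}(u) du ds`. -/
theorem double_fourier_legendre_coefficients
    (t T : ℝ) (ht : t < T)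
    (C : ℕ → ℕ → ℝ)
    (hC : ∀ j2 j1 : ℕ, C j2 j1 =
      ∫ s in t..T, scaledLegendre t T j2 s * ∫ u in t..s, scaledLegendre t T j1 u) :
    C 0 0 = (T - t) / 2 ∧
    (∀ i : ℕ, 1 ≤ i →
      C i (i - 1) = (T - t) / (2 * Real.sqrt (4 * (i : ℝ) ^ 2 - 1)) ∧
      C (i - 1) i = -((T - t) / (2 * Real.sqrt (4 * (i : ℝ) ^ 2 - 1)))) ∧
    (∀ j1 j2 : ℕ, ¬(j1 = 0 ∧ j2 = 0) → j2 ≠ j1 + 1 → j1 ≠ j2 + 1 →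
      C j2 j1 = 0) := by
  obtain rfl : C = legendreDoubleCoeff t T := funext fun j₂ => funext (hC j₂)
  refine ⟨by simp [legendreDoubleCoeff_zero ht], fun i hi => ?_,
    fun j₁ j₂ h00 hsucc hpred => ?_⟩
  · obtain ⟨n, rfl⟩ : ∃ n, i = n + 1 := ⟨i - 1, by omega⟩
    rw [Nat.add_sub_cancel, legendreDoubleCoeff_succ ht]
    refine ⟨?_, by simp⟩
    cases n with
    | zero => norm_num [legendreDoubleCoeff_zero ht]
    | succ n => rw [legendreDoubleCoeff_succ ht, if_pos rfl, if_neg (by omega), sub_zero]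
  · cases j₁ with
    | zero => rw [legendreDoubleCoeff_zero ht, if_neg (by omega), if_neg (by omega), add_zero]
    | succ n => rw [legendreDoubleCoeff_succ ht, if_neg (by omega), if_neg (by omega), sub_zero]
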